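/- Assume that for every (t,ω) ∈ [0,T] × Ω there exists ω̂ ∈ 𝒜(t,ω) such that X_u(ω̂) < X_t(ω) for all u ∈ (t,T]. Then for every (t,ω) with σ*(ω) ≥ t, the stopping time σ* is Pareto optimal with respect to 𝒜(t,ω): there is no stopping time τ with τ(ω'') ≥ t for all ω'' ∈ 𝒜(t,ω) such that R(t,ω;τ,ω') ≤ R(t,ω;σ*,ω') for all ω' ∈ 𝒜(t,ω) and R(t,ω;τ,ω'') < R(t,ω;σ*,ω'') for some ω'' ∈ 𝒜(t,ω). -/

import Mathlib

open Set

noncomputable section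

namespace SellingRegret

/-- Running maximum `X*_t(ω) = sup_{s ∈ [0,t]} X_s(ω)`, where `X_s(ω) = ω s`. -/
def Mstar (ω : ℝ → ℝ) (t : ℝ) : ℝ :=
  sSup (ω '' Set.Icc 0 t)

/-- `𝒜(t,ω)`: the trajectories in `Ω` agreeing with `ω` on `[0,t]`. -/
def Hist (Ω : Set (ℝ → ℝ)) (t : ℝ) (ω : ℝ → ℝ) : Set (ℝ → ℝ) :=
  {ω' ∈ Ω | ∀ s ∈ Set.Icc 0 t, ω' s = ω s}

/-- A stopping time: a map `τ : Ω → [0,T]` such that whenever `τ(ω) ≤ t` and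
`ω'` agrees with `ω` on `[0,t]`, one has `τ(ω') = τ(ω)`. -/
def IsStoppingTime (T : ℝ) (Ω : Set (ℝ → ℝ)) (τ : (ℝ → ℝ) → ℝ) : Prop :=
  (∀ ω ∈ Ω, τ ω ∈ Set.Icc 0 T) ∧
  ∀ ω ∈ Ω, ∀ t ∈ Set.Icc 0 T, τ ω ≤ t →
    ∀ ω' ∈ Ω, (∀ s ∈ Set.Icc 0 t, ω' s = ω s) → τ ω' = τ ω

/-- Estimated regret `R(t,ω;τ,ω') = max{X*_{τ(ω')}(ω') − X_{τ(ω')}(ω'), ψ(τ(ω'),ω')}`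
(it depends only on `τ` and `ω'`). -/
def regret (ψ : ℝ → (ℝ → ℝ) → ℝ) (τ : (ℝ → ℝ) → ℝ) (ω' : ℝ → ℝ) : ℝ :=
  max (Mstar ω' (τ ω') - ω' (τ ω')) (ψ (τ ω') ω')

/-- Worst-case estimated regret `ℛ(t,ω;τ) = sup_{ω' ∈ 𝒜(t,ω)} R(t,ω;τ,ω')`,
valued in `[0,∞]`. -/
def worstRegret (Ω : Set (ℝ → ℝ)) (ψ : ℝ → (ℝ → ℝ) → ℝ)
    (t : ℝ) (ω : ℝ → ℝ) (τ : (ℝ → ℝ) → ℝ) : ENNReal :=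
  ⨆ ω' ∈ Hist Ω t ω, ENNReal.ofReal (regret ψ τ ω')

/-- `σ*(ω) = inf {s ∈ [0,T] : X*_s(ω) − X_s(ω) ≥ ψ(s,ω)}`. -/
def sigmaStar (T : ℝ) (ψ : ℝ → (ℝ → ℝ) → ℝ) (ω : ℝ → ℝ) : ℝ :=
  sInf {s ∈ Set.Icc 0 T | ψ s ω ≤ Mstar ω s - ω s}

/-- `τ ∈ 𝒯_t(ω)`: `τ(ω') ≥ t` for all `ω' ∈ 𝒜(t,ω)`. -/
def Admissible (Ω : Set (ℝ → ℝ)) (t : ℝ) (ω : ℝ → ℝ) (τ : (ℝ → ℝ) → ℝ) : Prop :=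
  ∀ ω' ∈ Hist Ω t ω, t ≤ τ ω'

/-- `σ` is optimal with respect to `𝒜(t,ω)`. -/
def OptimalAt (T : ℝ) (Ω : Set (ℝ → ℝ)) (ψ : ℝ → (ℝ → ℝ) → ℝ)
    (t : ℝ) (ω : ℝ → ℝ) (σ : (ℝ → ℝ) → ℝ) : Prop :=
  IsStoppingTime T Ω σ ∧ Admissible Ω t ω σ ∧
  ∀ τ, IsStoppingTime T Ω τ → Admissible Ω t ω τ →
    worstRegret Ω ψ t ω σ ≤ worstRegret Ω ψ t ω τ

/-- `σ` is Pareto optimal with respect to `𝒜(t,ω)`. -/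
def ParetoOptimalAt (T : ℝ) (Ω : Set (ℝ → ℝ)) (ψ : ℝ → (ℝ → ℝ) → ℝ)
    (t : ℝ) (ω : ℝ → ℝ) (σ : (ℝ → ℝ) → ℝ) : Prop :=
  IsStoppingTime T Ω σ ∧ Admissible Ω t ω σ ∧
  ¬ ∃ τ, IsStoppingTime T Ω τ ∧ Admissible Ω t ω τ ∧
      (∀ ω' ∈ Hist Ω t ω, regret ψ τ ω' ≤ regret ψ σ ω') ∧
      ∃ ω'' ∈ Hist Ω t ω, regret ψ τ ω'' < regret ψ σ ω''

/-- `σ` is perfect: optimal and Pareto optimal with respect to `𝒜(t,ω)`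
whenever it is admissible for `𝒜(t,ω)`. -/
def Perfect (T : ℝ) (Ω : Set (ℝ → ℝ)) (ψ : ℝ → (ℝ → ℝ) → ℝ)
    (σ : (ℝ → ℝ) → ℝ) : Prop :=
  IsStoppingTime T Ω σ ∧
  ∀ t ∈ Set.Icc 0 T, ∀ ω ∈ Ω, Admissible Ω t ω σ →
    OptimalAt T Ω ψ t ω σ ∧ ParetoOptimalAt T Ω ψ t ω σ

/-- Conditions (A) and (B) of Theorem 2 for a stopping time `σ`. -/
def CondAB (T : ℝ) (Ω : Set (ℝ → ℝ)) (ψ : ℝ → (ℝ → ℝ) → ℝ)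
    (σ : (ℝ → ℝ) → ℝ) : Prop :=
  ∀ τ, IsStoppingTime T Ω τ → ∀ ω ∈ Ω,
    (σ ω < τ ω → ∃ ω' ∈ Hist Ω (σ ω) ω, regret ψ σ ω' < regret ψ τ ω') ∧
    (τ ω < σ ω → ∀ ω' ∈ Hist Ω (τ ω) ω, regret ψ σ ω' < regret ψ τ ω')

/-- `Ω = C([0,T],ℝ)`: all trajectories continuous on `[0,T]`. -/
def OmegaC (T : ℝ) : Set (ℝ → ℝ) :=
  {ω | ContinuousOn ω (Set.Icc 0 T)}

/-- The two-sided Lipschitz corridor of Example 2: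
`−L₁(t−s) ≤ ω(t) − ω(s) ≤ L₂(t−s)` for `0 ≤ s ≤ t ≤ T`. -/
def OmegaL (T L₁ L₂ : ℝ) : Set (ℝ → ℝ) :=
  {ω | ∀ s t : ℝ, 0 ≤ s → s ≤ t → t ≤ T →
    -L₁ * (t - s) ≤ ω t - ω s ∧ ω t - ω s ≤ L₂ * (t - s)}

/-!
At `σ*(ω)` the drawdown `X* − X` equals `ψ` (both are continuous and the drawdown starts
below `ψ`), so `σ*` incurs regret `ψ(σ*)`. A stopping time `τ` that stops earlier on some
path pays at least the strictly larger `ψ(τ)` there. If it stops later, take a continuation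
of that path which falls below its value at `σ*` immediately afterwards: the history up to
`σ*` is unchanged, so `σ*` still stops at the same time with the same regret, whereas `τ`
stops strictly later and sees a strictly larger drawdown. So `τ` cannot improve on `σ*` at
one path without losing at another.
-/

section RunningMax

variable {T : ℝ} {ω : ℝ → ℝ}

lemma bddAbove_image_Icc_of_le (hc : ContinuousOn ω (Icc 0 T)) {s : ℝ} (hs : s ≤ T) :
    BddAbove (ω '' Icc 0 s) :=
  (isCompact_Icc.image_of_continuousOn (hc.mono (Icc_subset_Icc le_rfl hs))).bddAbove

lemma Mstar_zero : Mstar ω 0 = ω 0 := by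
  simp [Mstar]

lemma Mstar_mono (hc : ContinuousOn ω (Icc 0 T)) {s s' : ℝ} (hs : 0 ≤ s) (hss' : s ≤ s')
    (hs' : s' ≤ T) : Mstar ω s ≤ Mstar ω s' :=
  csSup_le_csSup (bddAbove_image_Icc_of_le hc hs') ⟨ω 0, 0, ⟨le_rfl, hs⟩, rfl⟩
    (image_mono (Icc_subset_Icc le_rfl hss'))

lemma Mstar_congr {ω' : ℝ → ℝ} {s : ℝ} (h : EqOn ω' ω (Icc 0 s)) : Mstar ω' s = Mstar ω s := by
  rw [Mstar, Mstar, h.image_eq]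

/-- `Mstar ω s` is the supremum over `u ∈ [0,T]` of `ω (min u s)`, a continuous function of
`(s, u)` once `ω` is extended continuously to `ℝ`. -/
lemma continuousOn_Mstar (hT : 0 ≤ T) (hc : ContinuousOn ω (Icc 0 T)) :
    ContinuousOn (Mstar ω) (Icc 0 T) := by
  set ωext : ℝ → ℝ := fun x => ω (projIcc 0 T hT x)
  have hωext : Continuous ωext :=
    hc.comp_continuous (continuous_subtype_val.comp continuous_projIcc)
      fun x => (projIcc 0 T hT x).2
  have hsup : Continuous fun s => sSup ((fun u => ωext (min u s)) '' Icc 0 T) :=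
    isCompact_Icc.continuous_sSup (by fun_prop)
  refine hsup.continuousOn.congr fun s hs => ?_
  have himage : (fun u => ωext (min u s)) '' Icc 0 T = ω '' Icc 0 s := by
    ext y
    constructor
    · rintro ⟨u, hu, rfl⟩
      have hmin : min u s ∈ Icc 0 s := ⟨le_min hu.1 hs.1, min_le_right u s⟩
      refine ⟨min u s, hmin, ?_⟩
      simp only [ωext, projIcc_of_mem hT ⟨hmin.1, hmin.2.trans hs.2⟩]
    · rintro ⟨u, hu, rfl⟩
      refine ⟨u, ⟨hu.1, hu.2.trans hs.2⟩, ?_⟩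
      simp only [ωext, min_eq_left hu.2, projIcc_of_mem hT ⟨hu.1, hu.2.trans hs.2⟩]
  exact congrArg sSup himage.symm

end RunningMax

section History

variable {Ω : Set (ℝ → ℝ)} {ω ω' ω'' : ℝ → ℝ} {a b : ℝ}

lemma Hist_subset_Hist (hab : a ≤ b) : Hist Ω b ω ⊆ Hist Ω a ω :=
  fun _ h => ⟨h.1, fun s hs => h.2 s ⟨hs.1, hs.2.trans hab⟩⟩

lemma mem_Hist_trans (hab : a ≤ b) (h' : ω' ∈ Hist Ω a ω) (h'' : ω'' ∈ Hist Ω b ω') :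
    ω'' ∈ Hist Ω a ω :=
  ⟨h''.1, fun s hs => (h''.2 s ⟨hs.1, hs.2.trans hab⟩).trans (h'.2 s hs)⟩

end History

def stopRegion (T : ℝ) (ψ : ℝ → (ℝ → ℝ) → ℝ) (ω : ℝ → ℝ) : Set ℝ :=
  {s ∈ Icc 0 T | ψ s ω ≤ Mstar ω s - ω s}

section SigmaStar

variable {T : ℝ} {Ω : Set (ℝ → ℝ)} {ψ : ℝ → (ℝ → ℝ) → ℝ} {ω ω' : ℝ → ℝ}

lemma bddBelow_stopRegion : BddBelow (stopRegion T ψ ω) :=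
  ⟨0, fun _ hs => hs.1.1⟩

lemma sigmaStar_le_of_mem {s : ℝ} (hs : s ∈ stopRegion T ψ ω) : sigmaStar T ψ ω ≤ s :=
  csInf_le bddBelow_stopRegion hs

lemma right_mem_stopRegion (hT : 0 ≤ T) (hc : ContinuousOn ω (Icc 0 T)) (hψT : ψ T ω = 0) :
    T ∈ stopRegion T ψ ω := by
  refine ⟨right_mem_Icc.2 hT, ?_⟩
  have : ω T ≤ Mstar ω T :=
    le_csSup (bddAbove_image_Icc_of_le hc le_rfl) ⟨T, right_mem_Icc.2 hT, rfl⟩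
  linarith

lemma isClosed_stopRegion (hT : 0 ≤ T) (hc : ContinuousOn ω (Icc 0 T))
    (hψc : ContinuousOn (fun t => ψ t ω) (Icc 0 T)) : IsClosed (stopRegion T ψ ω) :=
  isClosed_Icc.isClosed_le hψc ((continuousOn_Mstar hT hc).sub hc)

lemma sigmaStar_mem_stopRegion (hT : 0 ≤ T) (hc : ContinuousOn ω (Icc 0 T))
    (hψT : ψ T ω = 0) (hψc : ContinuousOn (fun t => ψ t ω) (Icc 0 T)) :
    sigmaStar T ψ ω ∈ stopRegion T ψ ω :=
  (isClosed_stopRegion hT hc hψc).csInf_mem ⟨T, right_mem_stopRegion hT hc hψT⟩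
    bddBelow_stopRegion

/-- Before `σ*` the drawdown stays below `ψ`; by continuity this persists at `σ*` itself. -/
lemma Mstar_sub_sigmaStar_le (hT : 0 ≤ T) (hc : ContinuousOn ω (Icc 0 T))
    (hψT : ψ T ω = 0) (hψnn : ∀ t ∈ Icc 0 T, 0 ≤ ψ t ω)
    (hψc : ContinuousOn (fun t => ψ t ω) (Icc 0 T)) :
    Mstar ω (sigmaStar T ψ ω) - ω (sigmaStar T ψ ω) ≤ ψ (sigmaStar T ψ ω) ω := by
  set σ := sigmaStar T ψ ω
  have hσ : σ ∈ Icc 0 T := (sigmaStar_mem_stopRegion hT hc hψT hψc).1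
  rcases hσ.1.eq_or_lt with hσ0 | hσpos
  · rw [← hσ0, Mstar_zero, sub_self]
    exact hψnn 0 ⟨le_rfl, hT⟩
  have hIcc : closure (Ico 0 σ) ⊆ Icc 0 T := by
    rw [closure_Ico hσpos.ne]
    exact Icc_subset_Icc le_rfl hσ.2
  have hbefore : ∀ s ∈ Ico 0 σ, Mstar ω s - ω s ≤ ψ s ω := fun s hs =>
    le_of_lt <| not_le.1 fun hle =>
      (sigmaStar_le_of_mem ⟨⟨hs.1, hs.2.le.trans hσ.2⟩, hle⟩).not_gt hs.2
  refine le_on_closure hbefore (((continuousOn_Mstar hT hc).sub hc).mono hIcc) (hψc.mono hIcc) ?_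
  rw [closure_Ico hσpos.ne]
  exact right_mem_Icc.2 hσ.1

lemma psi_sigmaStar_eq (hT : 0 ≤ T) (hc : ContinuousOn ω (Icc 0 T))
    (hψT : ψ T ω = 0) (hψnn : ∀ t ∈ Icc 0 T, 0 ≤ ψ t ω)
    (hψc : ContinuousOn (fun t => ψ t ω) (Icc 0 T)) :
    ψ (sigmaStar T ψ ω) ω = Mstar ω (sigmaStar T ψ ω) - ω (sigmaStar T ψ ω) :=
  le_antisymm (sigmaStar_mem_stopRegion hT hc hψT hψc).2
    (Mstar_sub_sigmaStar_le hT hc hψT hψnn hψc)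

lemma mem_stopRegion_iff_of_mem_Hist
    (hψh : ∀ t ∈ Icc 0 T, ∀ ω ∈ Ω, ∀ ω' ∈ Hist Ω t ω, ψ t ω' = ψ t ω)
    (hω : ω ∈ Ω) {a s : ℝ} (hω' : ω' ∈ Hist Ω a ω) (hsa : s ≤ a) :
    s ∈ stopRegion T ψ ω' ↔ s ∈ stopRegion T ψ ω := by
  have hω's : ω' ∈ Hist Ω s ω := Hist_subset_Hist hsa hω'
  refine and_congr_right fun hs => ?_
  rw [hψh s hs ω hω ω' hω's, Mstar_congr hω's.2, hω's.2 s ⟨hs.1, le_rfl⟩]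

lemma le_sigmaStar_of_mem_Hist
    (hψh : ∀ t ∈ Icc 0 T, ∀ ω ∈ Ω, ∀ ω' ∈ Hist Ω t ω, ψ t ω' = ψ t ω)
    (hω : ω ∈ Ω) {a : ℝ} (hω' : ω' ∈ Hist Ω a ω) (hne : (stopRegion T ψ ω').Nonempty)
    (ha : a ≤ sigmaStar T ψ ω) : a ≤ sigmaStar T ψ ω' :=
  le_csInf hne fun _ hs => le_of_not_gt fun hsa =>
    (sigmaStar_le_of_mem ((mem_stopRegion_iff_of_mem_Hist hψh hω hω' hsa.le).1 hs)).not_gt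
      (hsa.trans_le ha)

lemma regret_eq_of_mem_stopRegion {σ : (ℝ → ℝ) → ℝ} (h : σ ω ∈ stopRegion T ψ ω) :
    regret ψ σ ω = Mstar ω (σ ω) - ω (σ ω) :=
  max_eq_left h.2

lemma regret_sigmaStar_lt_of_lt (hT : 0 ≤ T) (hc : ContinuousOn ω (Icc 0 T))
    (hψT : ψ T ω = 0) (hψnn : ∀ t ∈ Icc 0 T, 0 ≤ ψ t ω)
    (hψc : ContinuousOn (fun t => ψ t ω) (Icc 0 T))
    (hψa : StrictAntiOn (fun t => ψ t ω) (Icc 0 T))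
    {τ : (ℝ → ℝ) → ℝ} (hτ : τ ω ∈ Icc 0 T) (hlt : τ ω < sigmaStar T ψ ω) :
    regret ψ (sigmaStar T ψ) ω < regret ψ τ ω :=
  calc regret ψ (sigmaStar T ψ) ω = ψ (sigmaStar T ψ ω) ω := by
        rw [regret, ← psi_sigmaStar_eq hT hc hψT hψnn hψc, max_self]
    _ < ψ (τ ω) ω := hψa hτ (sigmaStar_mem_stopRegion hT hc hψT hψc).1 hlt
    _ ≤ regret ψ τ ω := le_max_right _ _

lemma exists_regret_sigmaStar_lt_of_gt (hT : 0 ≤ T)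
    (hΩ : ∀ ω ∈ Ω, ContinuousOn ω (Icc 0 T))
    (hψT : ∀ ω ∈ Ω, ψ T ω = 0)
    (hψc : ∀ ω ∈ Ω, ContinuousOn (fun t => ψ t ω) (Icc 0 T))
    (hψh : ∀ t ∈ Icc 0 T, ∀ ω ∈ Ω, ∀ ω' ∈ Hist Ω t ω, ψ t ω' = ψ t ω)
    (hreach : ∀ t ∈ Icc 0 T, ∀ ω ∈ Ω,
      ∃ ωh ∈ Hist Ω t ω, ∀ u, t < u → u ≤ T → ωh u < ω t)
    {τ : (ℝ → ℝ) → ℝ} (hτ : IsStoppingTime T Ω τ) (hω : ω ∈ Ω)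
    (hlt : sigmaStar T ψ ω < τ ω) :
    ∃ ωh ∈ Hist Ω (sigmaStar T ψ ω) ω, regret ψ (sigmaStar T ψ) ωh < regret ψ τ ωh := by
  set s := sigmaStar T ψ ω
  have hs : s ∈ stopRegion T ψ ω :=
    sigmaStar_mem_stopRegion hT (hΩ ω hω) (hψT ω hω) (hψc ω hω)
  obtain ⟨ωh, hωh, hdrop⟩ := hreach s hs.1 ω hω
  refine ⟨ωh, hωh, ?_⟩
  have hsh : s ∈ stopRegion T ψ ωh := (mem_stopRegion_iff_of_mem_Hist hψh hω hωh le_rfl).2 hs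
  have hσh : sigmaStar T ψ ωh = s :=
    le_antisymm (sigmaStar_le_of_mem hsh) (le_sigmaStar_of_mem_Hist hψh hω hωh ⟨s, hsh⟩ le_rfl)
  have hτh : s < τ ωh := by
    by_contra! hle
    have hsame : τ ω = τ ωh := hτ.2 ωh hωh.1 s hs.1 hle ω hω fun u hu => (hωh.2 u hu).symm
    linarith
  have hτhT : τ ωh ≤ T := (hτ.1 ωh hωh.1).2
  have hMstar : Mstar ωh s ≤ Mstar ωh (τ ωh) := Mstar_mono (hΩ ωh hωh.1) hs.1.1 hτh.le hτhT
  have hdrop' : ωh (τ ωh) < ωh s := (hωh.2 s ⟨hs.1.1, le_rfl⟩).symm ▸ hdrop _ hτh hτhT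
  calc regret ψ (sigmaStar T ψ) ωh = Mstar ωh s - ωh s := by
        rw [regret_eq_of_mem_stopRegion (hσh.symm ▸ hsh), hσh]
    _ < Mstar ωh (τ ωh) - ωh (τ ωh) := by linarith
    _ ≤ regret ψ τ ωh := le_max_left _ _

end SigmaStar

theorem stmt7_general (T : ℝ) (hT : 0 < T) (Ω : Set (ℝ → ℝ))
    (hΩ : ∀ ω ∈ Ω, ContinuousOn ω (Set.Icc 0 T))
    (ψ : ℝ → (ℝ → ℝ) → ℝ)
    (hψT : ∀ ω ∈ Ω, ψ T ω = 0)
    (hψnn : ∀ ω ∈ Ω, ∀ t ∈ Set.Icc 0 T, 0 ≤ ψ t ω)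
    (hψc : ∀ ω ∈ Ω, ContinuousOn (fun t => ψ t ω) (Set.Icc 0 T))
    (hψa : ∀ ω ∈ Ω, StrictAntiOn (fun t => ψ t ω) (Set.Icc 0 T))
    (hψh : ∀ t ∈ Set.Icc 0 T, ∀ ω ∈ Ω, ∀ ω' ∈ Hist Ω t ω, ψ t ω' = ψ t ω)
    (hreach : ∀ t ∈ Set.Icc 0 T, ∀ ω ∈ Ω,
      ∃ ωh ∈ Hist Ω t ω, ∀ u, t < u → u ≤ T → ωh u < ω t)
    (t : ℝ) (ω : ℝ → ℝ) (hω : ω ∈ Ω)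
    (hσ : t ≤ sigmaStar T ψ ω) :
    ¬ ∃ τ, IsStoppingTime T Ω τ ∧ (∀ ω'' ∈ Hist Ω t ω, t ≤ τ ω'') ∧
        (∀ ω' ∈ Hist Ω t ω, regret ψ τ ω' ≤ regret ψ (sigmaStar T ψ) ω') ∧
        ∃ ω'' ∈ Hist Ω t ω, regret ψ τ ω'' < regret ψ (sigmaStar T ψ) ω'' := by
  rintro ⟨τ, hτ, -, hle, ω'', hω'', hlt⟩
  have hΩ'' := hω''.1
  have hσ'' : t ≤ sigmaStar T ψ ω'' :=
    le_sigmaStar_of_mem_Hist hψh hω hω''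
      ⟨T, right_mem_stopRegion hT.le (hΩ ω'' hΩ'') (hψT ω'' hΩ'')⟩ hσ
  rcases lt_trichotomy (τ ω'') (sigmaStar T ψ ω'') with hearly | hsame | hlate
  · exact (regret_sigmaStar_lt_of_lt hT.le (hΩ ω'' hΩ'') (hψT ω'' hΩ'') (hψnn ω'' hΩ'')
      (hψc ω'' hΩ'') (hψa ω'' hΩ'') (hτ.1 ω'' hΩ'') hearly).not_gt hlt
  · exact hlt.ne (by rw [regret, regret, hsame])
  · obtain ⟨ωh, hωh, hgt⟩ :=
      exists_regret_sigmaStar_lt_of_gt hT.le hΩ hψT hψc hψh hreach hτ hΩ'' hlate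
    exact (hle ωh (mem_Hist_trans hσ'' hω'' hωh)).not_gt hgt

/-- under the reaching assumption, for every `(t,ω)` with
`σ*(ω) ≥ t`, the stopping time `σ*` is Pareto optimal with respect to `𝒜(t,ω)`:
no admissible stopping time `τ` satisfies `R(t,ω;τ,ω') ≤ R(t,ω;σ*,ω')` for all
`ω' ∈ 𝒜(t,ω)` with strict inequality for some `ω'' ∈ 𝒜(t,ω)`. -/
theorem stmt7 (T : ℝ) (hT : 0 < T) (Ω : Set (ℝ → ℝ))
    (hΩ : ∀ ω ∈ Ω, ContinuousOn ω (Set.Icc 0 T))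
    (ψ : ℝ → (ℝ → ℝ) → ℝ)
    (hψT : ∀ ω ∈ Ω, ψ T ω = 0)
    (hψnn : ∀ ω ∈ Ω, ∀ t ∈ Set.Icc 0 T, 0 ≤ ψ t ω)
    (hψc : ∀ ω ∈ Ω, ContinuousOn (fun t => ψ t ω) (Set.Icc 0 T))
    (hψa : ∀ ω ∈ Ω, StrictAntiOn (fun t => ψ t ω) (Set.Icc 0 T))
    (hψh : ∀ t ∈ Set.Icc 0 T, ∀ ω ∈ Ω, ∀ ω' ∈ Hist Ω t ω, ψ t ω' = ψ t ω)
    (hreach : ∀ t ∈ Set.Icc 0 T, ∀ ω ∈ Ω,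
      ∃ ωh ∈ Hist Ω t ω, ∀ u, t < u → u ≤ T → ωh u < ω t)
    (t : ℝ) (ht : t ∈ Set.Icc 0 T) (ω : ℝ → ℝ) (hω : ω ∈ Ω)
    (hσ : t ≤ sigmaStar T ψ ω) :
    ¬ ∃ τ, IsStoppingTime T Ω τ ∧ (∀ ω'' ∈ Hist Ω t ω, t ≤ τ ω'') ∧
        (∀ ω' ∈ Hist Ω t ω, regret ψ τ ω' ≤ regret ψ (sigmaStar T ψ) ω') ∧
        ∃ ω'' ∈ Hist Ω t ω, regret ψ τ ω'' < regret ψ (sigmaStar T ψ) ω'' :=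
  stmt7_general T hT Ω hΩ ψ hψT hψnn hψc hψa hψh hreach t ω hω hσ

end SellingRegret

end
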